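/- arXiv:1407.0628 — 10 statements merged into one kernel-verified Lean document; each statement's English description precedes it below -/
import Mathlib

section
/- Let G be a finite connected simple graph with shortest-path distance d_G, let a, c, b, d be vertices of G, and let {x,y} be an edge of G such that d_G(a,x) + 1 + d_G(y,c) = d_G(a,c) and d_G(b,y) + 1 + d_G(x,d) = d_G(b,d) (i.e., the edge {x,y} is traversed in the direction x→y on some shortest a–c path and in the opposite direction y→x on some shortest b–d path). Then d_G(a,d) + d_G(b,c) ≤ d_G(a,c) + d_G(b,d) − 2. Consequently, swapping the two destinations strictly decreases the total distance travelled, so in any optimal solution of the connectivity movement problem minimizing total movement no edge is traversed in opposite directions by two pebbles. -/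
/-- If the edge `{x,y}` is traversed in direction `x→y` on a shortest `a`–`c` path
and in direction `y→x` on a shortest `b`–`d` path of a finite connected simple graph,
then swapping the destinations saves at least `2` in total distance. -/
theorem stmt_0 {V : Type*} [Fintype V] (G : SimpleGraph V) (hG : G.Connected)
    (a c b d x y : V) (hxy : G.Adj x y)
    (h1 : G.dist a x + 1 + G.dist y c = G.dist a c)
    (h2 : G.dist b y + 1 + G.dist x d = G.dist b d) :
    G.dist a d + G.dist b c ≤ G.dist a c + G.dist b d - 2 := by
  have t1 : G.dist a d ≤ G.dist a x + G.dist x d :=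
    hG.dist_triangle (u := a) (v := x) (w := d)
  have t2 : G.dist b c ≤ G.dist b y + G.dist y c :=
    hG.dist_triangle (u := b) (v := y) (w := c)
  omega
end

section
/- Let G be a finite simple graph and let U* be a maximum independent set of G (an independent set of maximum cardinality). Then for every independent set U of G it holds that |U* ∩ N_G[U]| ≥ |U|, where N_G[U] denotes the closed neighbourhood of U. -/
/-- If `Ustar` is a maximum independent set of a finite simple graph `G`, then for every
independent set `U` of `G`, the closed neighbourhood of `U` contains at least `|U|`
vertices of `Ustar`. -/
theorem stmt_1 {V : Type*} [Fintype V] (G : SimpleGraph V) (Ustar : Set V)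
    (hUstarIndep : ∀ u ∈ Ustar, ∀ v ∈ Ustar, u ≠ v → ¬ G.Adj u v)
    (hUstarMax : ∀ U : Set V, (∀ u ∈ U, ∀ v ∈ U, u ≠ v → ¬ G.Adj u v) → U.ncard ≤ Ustar.ncard)
    (U : Set V) (hU : ∀ u ∈ U, ∀ v ∈ U, u ≠ v → ¬ G.Adj u v) :
    U.ncard ≤ (Ustar ∩ (U ∪ {v | ∃ u ∈ U, G.Adj u v})).ncard := by
  set N : Set V := U ∪ {v | ∃ u ∈ U, G.Adj u v} with hN
  have hUN : U ⊆ N := Set.subset_union_left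
  set W : Set V := (Ustar \ N) ∪ U with hW
  have hWindep : ∀ u ∈ W, ∀ v ∈ W, u ≠ v → ¬ G.Adj u v := by
    rintro u hu v hv hne hadj
    rcases hu with hu | hu <;> rcases hv with hv | hv
    · exact hUstarIndep u hu.1 v hv.1 hne hadj
    · exact hu.2 (Or.inr ⟨v, hv, hadj.symm⟩)
    · exact hv.2 (Or.inr ⟨u, hu, hadj⟩)
    · exact hU u hu v hv hne hadj
  have hWcard := hUstarMax W hWindep
  have hfin : ∀ (S : Set V), S.Finite := fun S => S.toFinite
  have hdisj : Disjoint (Ustar \ N) U := by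
    rw [Set.disjoint_left]
    rintro x hx hxU
    exact hx.2 (hUN hxU)
  have hWeq : W.ncard = (Ustar \ N).ncard + U.ncard :=
    Set.ncard_union_eq hdisj (hfin _) (hfin _)
  have hsplit : (Ustar \ N).ncard + (Ustar ∩ N).ncard = Ustar.ncard := by
    rw [← Set.ncard_union_eq (Set.disjoint_left.mpr fun x hx hx2 => hx.2 hx2.2)
      (hfin _) (hfin _), Set.diff_union_inter]
  omega
end

section
/- Let G be a finite simple graph and let U* be a maximum independent set of G. Then for every independent set U of G there exists an injective function f : U → U* such that for every u ∈ U either f(u) = u or f(u) is adjacent to u in G (equivalently, d_G(u, f(u)) ≤ 1). -/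
/-- If `Ustar` is a maximum independent set of a finite simple graph `G`, then for every
independent set `U` there is an injection `f : U → Ustar` moving each vertex by at most
one step: `f u = u` or `f u` is adjacent to `u`. -/
theorem stmt_2 {V : Type*} [Fintype V] (G : SimpleGraph V) (Ustar : Set V)
    (hUstarIndep : ∀ u ∈ Ustar, ∀ v ∈ Ustar, u ≠ v → ¬ G.Adj u v)
    (hUstarMax : ∀ U : Set V, (∀ u ∈ U, ∀ v ∈ U, u ≠ v → ¬ G.Adj u v) → U.ncard ≤ Ustar.ncard)
    (U : Set V) (hU : ∀ u ∈ U, ∀ v ∈ U, u ≠ v → ¬ G.Adj u v) :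
    ∃ f : U → Ustar, Function.Injective f ∧
      ∀ u : U, (f u : V) = (u : V) ∨ G.Adj (u : V) (f u : V) := by
  classical
  haveI : Fintype ↥U := Fintype.ofFinite _
  set t : U → Finset V := fun u =>
    (Set.toFinset Ustar).filter (fun v => v = (u : V) ∨ G.Adj u v) with ht
  have hall : ∀ s : Finset U, s.card ≤ (s.biUnion t).card := by
    intro s
    set S : Finset V := s.image Subtype.val with hS
    set N : Set V := {v | ∃ u ∈ S, v = u ∨ G.Adj u v} with hN
    have hSN : ∀ x ∈ S, x ∈ N := fun x hx => ⟨x, hx, Or.inl rfl⟩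
    set W : Set V := (Ustar \ N) ∪ ↑S with hW
    have hWindep : ∀ a ∈ W, ∀ b ∈ W, a ≠ b → ¬ G.Adj a b := by
      intro a ha b hb hab hadj
      rcases ha with ⟨haU, haN⟩ | haS
      · rcases hb with ⟨hbU, hbN⟩ | hbS
        · exact hUstarIndep a haU b hbU hab hadj
        · exact haN ⟨b, hbS, Or.inr hadj.symm⟩
      · rcases hb with ⟨hbU, hbN⟩ | hbS
        · exact hbN ⟨a, haS, Or.inr hadj⟩
        · obtain ⟨⟨a', ha'U⟩, ha's, rfl⟩ := Finset.mem_image.mp haS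
          obtain ⟨⟨b', hb'U⟩, hb's, rfl⟩ := Finset.mem_image.mp hbS
          exact hU _ ha'U _ hb'U hab hadj
    have h1 : W.ncard ≤ Ustar.ncard := hUstarMax W hWindep
    have hdisj : Disjoint (Ustar \ N) (↑S : Set V) := by
      rw [Set.disjoint_right]
      intro x hx hx'
      exact hx'.2 (hSN x hx)
    have h2 : W.ncard = (Ustar \ N).ncard + S.card := by
      rw [hW, Set.ncard_union_eq hdisj (Set.toFinite _) (Set.toFinite _),
        Set.ncard_coe_finset]
    have hsub : Ustar ⊆ (Ustar \ N) ∪ ↑(s.biUnion t) := by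
      intro w hw
      by_cases hwN : w ∈ N
      · right
        obtain ⟨u, huS, hcond⟩ := hwN
        obtain ⟨x, hxs, rfl⟩ := Finset.mem_image.mp huS
        have : w ∈ s.biUnion t :=
          Finset.mem_biUnion.mpr ⟨x, hxs,
            Finset.mem_filter.mpr ⟨Set.mem_toFinset.mpr hw, hcond⟩⟩
        exact_mod_cast this
      · left; exact ⟨hw, hwN⟩
    have h3 : Ustar.ncard ≤ (Ustar \ N).ncard + (s.biUnion t).card := by
      calc Ustar.ncard ≤ ((Ustar \ N) ∪ ↑(s.biUnion t)).ncard :=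
            Set.ncard_le_ncard hsub (Set.toFinite _)
        _ ≤ (Ustar \ N).ncard + (↑(s.biUnion t) : Set V).ncard := Set.ncard_union_le _ _
        _ = _ := by rw [Set.ncard_coe_finset]
    have hScard : S.card = s.card :=
      Finset.card_image_of_injective _ Subtype.val_injective
    omega
  obtain ⟨f, hfinj, hft⟩ := (Finset.all_card_le_biUnion_card_iff_existsInjective' t).mp hall
  refine ⟨fun u => ⟨f u, ?_⟩, ?_, ?_⟩
  · have h := hft u
    exact Set.mem_toFinset.mp (Finset.mem_filter.mp h).1
  · intro a b hab
    exact hfinj (congrArg Subtype.val hab)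
  · intro u
    have h := (Finset.mem_filter.mp (hft u)).2
    rcases h with h | h
    · exact Or.inl h
    · exact Or.inr h
end

section
/- Let G be a finite connected simple graph, let U* be a maximum independent set of G, let P be a finite set of pebbles with start map σ : P → V(G), and suppose μ* : P → V(G) is injective with independent image (a feasible solution of the independency movement problem). Then there exists an injective map ν : P → U* such that max_{p∈P} d_G(σ(p), ν(p)) ≤ max_{p∈P} d_G(σ(p), μ*(p)) + 1. In particular, the pebbles can always be placed on vertices of U* at a maximum-movement cost exceeding the optimum by at most 1. -/
/-- Given a maximum independent set `Ustar` of a finite connected simple graph `G` and a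
feasible solution `μ*` of the independency movement problem (injective, independent image),
the pebbles can be placed injectively on vertices of `Ustar` with maximum movement at most
one more than that of `μ*`. -/
theorem stmt_3 {V P : Type*} [Fintype V] [Fintype P] (G : SimpleGraph V) (hG : G.Connected)
    (Ustar : Set V)
    (hUstarIndep : ∀ u ∈ Ustar, ∀ v ∈ Ustar, u ≠ v → ¬ G.Adj u v)
    (hUstarMax : ∀ U : Set V, (∀ u ∈ U, ∀ v ∈ U, u ≠ v → ¬ G.Adj u v) → U.ncard ≤ Ustar.ncard)
    (σ : P → V) (μstar : P → V) (hinj : Function.Injective μstar)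
    (hindep : ∀ p q : P, p ≠ q → ¬ G.Adj (μstar p) (μstar q)) :
    ∃ ν : P → V, Function.Injective ν ∧ (∀ p, ν p ∈ Ustar) ∧
      (Finset.univ.sup fun p => G.dist (σ p) (ν p)) ≤
        (Finset.univ.sup fun p => G.dist (σ p) (μstar p)) + 1 := by
  classical
  set t : P → Finset V := fun p =>
    Ustar.toFinset.filter (fun v => v = μstar p ∨ G.Adj (μstar p) v) with ht
  have hmem : ∀ p v, v ∈ t p ↔ v ∈ Ustar ∧ (v = μstar p ∨ G.Adj (μstar p) v) := by
    intro p v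
    simp [ht, Set.mem_toFinset]
  -- Hall's condition
  have hall : ∀ s : Finset P, s.card ≤ (s.biUnion t).card := by
    intro s
    by_contra hlt
    push_neg at hlt
    set B := s.biUnion t with hB
    set A := s.image μstar with hA
    have hAcard : A.card = s.card := Finset.card_image_of_injective s hinj
    have hBU : ∀ v ∈ B, v ∈ Ustar := by
      intro v hv
      obtain ⟨p, _, hp⟩ := Finset.mem_biUnion.mp hv
      exact ((hmem p v).mp hp).1
    -- the set U' = (Ustar \ B) ∪ A
    set U' : Finset V := (Ustar.toFinset \ B) ∪ A with hU'
    -- A is disjoint from Ustar \ B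
    have hdisj : Disjoint (Ustar.toFinset \ B) A := by
      rw [Finset.disjoint_right]
      intro a haA haS
      obtain ⟨p, hps, hpa⟩ := Finset.mem_image.mp haA
      have haU : a ∈ Ustar := Set.mem_toFinset.mp (Finset.mem_sdiff.mp haS).1
      have : a ∈ t p := (hmem p a).mpr ⟨haU, Or.inl hpa.symm⟩
      exact (Finset.mem_sdiff.mp haS).2 (Finset.mem_biUnion.mpr ⟨p, hps, this⟩)
    -- U' is independent
    have hU'indep : ∀ u ∈ (↑U' : Set V), ∀ v ∈ (↑U' : Set V), u ≠ v → ¬ G.Adj u v := by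
      intro u hu v hv huv hadj
      simp only [hU', Finset.coe_union, Set.mem_union, Finset.mem_coe] at hu hv
      rcases hu with hu | hu <;> rcases hv with hv | hv
      · have hu' := Set.mem_toFinset.mp (Finset.mem_sdiff.mp hu).1
        have hv' := Set.mem_toFinset.mp (Finset.mem_sdiff.mp hv).1
        exact hUstarIndep u hu' v hv' huv hadj
      · -- u ∈ Ustar \ B, v = μstar q
        obtain ⟨q, hqs, hq⟩ := Finset.mem_image.mp hv
        have hu' := Set.mem_toFinset.mp (Finset.mem_sdiff.mp hu).1
        have : u ∈ t q := (hmem q u).mpr ⟨hu', Or.inr (hq ▸ hadj.symm)⟩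
        exact (Finset.mem_sdiff.mp hu).2 (Finset.mem_biUnion.mpr ⟨q, hqs, this⟩)
      · obtain ⟨q, hqs, hq⟩ := Finset.mem_image.mp hu
        have hv' := Set.mem_toFinset.mp (Finset.mem_sdiff.mp hv).1
        have : v ∈ t q := (hmem q v).mpr ⟨hv', Or.inr (hq ▸ hadj)⟩
        exact (Finset.mem_sdiff.mp hv).2 (Finset.mem_biUnion.mpr ⟨q, hqs, this⟩)
      · obtain ⟨p, hps, hp⟩ := Finset.mem_image.mp hu
        obtain ⟨q, hqs, hq⟩ := Finset.mem_image.mp hv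
        have hpq : p ≠ q := by rintro rfl; exact huv (hp.symm.trans hq)
        exact hindep p q hpq (hp ▸ hq ▸ hadj)
    -- cardinality contradiction
    have hBsub : B ⊆ Ustar.toFinset := fun v hv => Set.mem_toFinset.mpr (hBU v hv)
    have hcard : U'.card = Ustar.toFinset.card - B.card + s.card := by
      rw [hU', Finset.card_union_of_disjoint hdisj, Finset.card_sdiff_of_subset hBsub, hAcard]
    have hBle : B.card ≤ Ustar.toFinset.card := Finset.card_le_card hBsub
    have hgt : Ustar.toFinset.card < U'.card := by omega
    have := hUstarMax (↑U' : Set V) hU'indep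
    rw [Set.ncard_coe_finset] at this
    rw [Set.ncard_eq_toFinset_card'] at this
    omega
  obtain ⟨f, hfinj, hf⟩ := (Finset.all_card_le_biUnion_card_iff_exists_injective t).mp hall
  refine ⟨f, hfinj, fun p => ((hmem p (f p)).mp (hf p)).1, ?_⟩
  apply Finset.sup_le
  intro p _
  have hd1 : G.dist (μstar p) (f p) ≤ 1 := by
    rcases ((hmem p (f p)).mp (hf p)).2 with h | h
    · simp [h, SimpleGraph.dist_self]
    · exact le_of_eq ((SimpleGraph.dist_eq_one_iff_adj).mpr h)
  have htri := hG.dist_triangle (u := σ p) (v := μstar p) (w := f p)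
  have hsup : G.dist (σ p) (μstar p) ≤ Finset.univ.sup fun p => G.dist (σ p) (μstar p) :=
    Finset.le_sup (f := fun p => G.dist (σ p) (μstar p)) (Finset.mem_univ p)
  omega
end

section
/- Let G be a finite connected simple graph, P a nonempty finite set of pebbles with start map σ : P → V(G), and let μ* : P → V(G) be any solution whose image μ*[P] is a clique of G. Then there exists a vertex u ∈ V(G) such that max_{p∈P} d_G(σ(p), u) ≤ max_{p∈P} d_G(σ(p), μ*(p)) + 1; in particular, moving all pebbles to a single best vertex gives a solution to the clique movement problem with maximum movement at most one more than the optimum. -/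
/-- If `μ*` is any solution of the clique movement problem (image a clique), then some
single vertex `u` receives all pebbles at maximum movement at most one more than that
of `μ*`. -/
theorem stmt_5 {V P : Type*} [Fintype V] [Fintype P] [Nonempty P]
    (G : SimpleGraph V) (hG : G.Connected) (σ : P → V)
    (μstar : P → V) (hclique : G.IsClique (Set.range μstar)) :
    ∃ u : V, (Finset.univ.sup fun p => G.dist (σ p) u) ≤
      (Finset.univ.sup fun p => G.dist (σ p) (μstar p)) + 1 := by
  obtain ⟨p0⟩ := ‹Nonempty P›
  refine ⟨μstar p0, Finset.sup_le fun p _ => ?_⟩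
  have h1 : G.dist (μstar p) (μstar p0) ≤ 1 := by
    by_cases h : μstar p = μstar p0
    · rw [h]; simp [SimpleGraph.dist_self]
    · have hadj : G.Adj (μstar p) (μstar p0) :=
        hclique ⟨p, rfl⟩ ⟨p0, rfl⟩ h
      exact le_of_eq (SimpleGraph.dist_eq_one_iff_adj.mpr hadj)
  calc G.dist (σ p) (μstar p0)
      ≤ G.dist (σ p) (μstar p) + G.dist (μstar p) (μstar p0) :=
        hG.dist_triangle
    _ ≤ G.dist (σ p) (μstar p) + 1 := by omega
    _ ≤ (Finset.univ.sup fun p => G.dist (σ p) (μstar p)) + 1 := by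
        have := Finset.le_sup (f := fun p => G.dist (σ p) (μstar p))
          (Finset.mem_univ p)
        omega
end

section
/- Let G be a finite connected simple graph, P a nonempty finite set of pebbles, and σ : P → V(G) an injective start map (no two pebbles share a vertex). Let H be the subgraph of G induced by σ[P] and let H̄ be the complement graph of H (same vertex set, with {u,v} an edge of H̄ iff u ≠ v and {u,v} is not an edge of H). Then the minimum, over all solutions μ : P → V(G) whose image μ[P] is a clique of G, of the number of moved pebbles |{p ∈ P : μ(p) ≠ σ(p)}| is equal to the minimum size of a vertex cover of H̄. -/
/-- With one pebble on each vertex of `σ[P]` (σ injective), the minimum number of moved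
pebbles over solutions whose image is a clique of `G` equals the minimum size of a vertex
cover of the complement of the subgraph of `G` induced by `σ[P]`. -/
theorem stmt_6 {V P : Type*} [Fintype V] [Fintype P] [Nonempty P]
    (G : SimpleGraph V) (hG : G.Connected) (σ : P → V) (hσ : Function.Injective σ) :
    sInf {n : ℕ | ∃ μ : P → V, G.IsClique (Set.range μ) ∧ n = {p : P | μ p ≠ σ p}.ncard} =
      sInf {n : ℕ | ∃ C : Set V, C ⊆ Set.range σ ∧
        (∀ u ∈ Set.range σ, ∀ v ∈ Set.range σ, u ≠ v → ¬ G.Adj u v → u ∈ C ∨ v ∈ C) ∧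
        n = C.ncard} := by
  classical
  obtain ⟨p₀⟩ := ‹Nonempty P›
  have hBne : {n : ℕ | ∃ C : Set V, C ⊆ Set.range σ ∧
      (∀ u ∈ Set.range σ, ∀ v ∈ Set.range σ, u ≠ v → ¬ G.Adj u v → u ∈ C ∨ v ∈ C) ∧
      n = C.ncard}.Nonempty := by
    exact ⟨(Set.range σ).ncard, Set.range σ, subset_rfl,
      fun u hu v hv _ _ => Or.inl hu, rfl⟩
  have hAne : {n : ℕ | ∃ μ : P → V, G.IsClique (Set.range μ) ∧
      n = {p : P | μ p ≠ σ p}.ncard}.Nonempty := by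
    refine ⟨_, fun _ => σ p₀, ?_, rfl⟩
    rw [Set.range_const]
    exact G.isClique_singleton _
  apply le_antisymm
  · -- LHS ≤ RHS : from a minimum cover C build a solution μ
    obtain ⟨C, hCsub, hcov, hn⟩ := Nat.sInf_mem hBne
    by_cases hS : ∃ p, σ p ∉ C
    · obtain ⟨q, hq⟩ := hS
      set μ : P → V := fun p => if σ p ∈ C then σ q else σ p with hμ
      have hmem : ∀ u ∈ Set.range μ, u ∈ Set.range σ ∧ u ∉ C := by
        rintro u ⟨p, rfl⟩
        simp only [hμ]
        by_cases h : σ p ∈ C <;> simp [h, hq]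
      have hclique : G.IsClique (Set.range μ) := by
        intro u hu v hv huv
        obtain ⟨hu1, hu2⟩ := hmem u hu
        obtain ⟨hv1, hv2⟩ := hmem v hv
        by_contra hadj
        rcases hcov u hu1 v hv1 huv hadj with h | h
        · exact hu2 h
        · exact hv2 h
      have hset : {p : P | μ p ≠ σ p} = {p : P | σ p ∈ C} := by
        ext p
        simp only [Set.mem_setOf_eq, hμ]
        by_cases h : σ p ∈ C
        · simp only [h, if_true, iff_true]
          intro heq
          exact hq (heq ▸ h)
        · simp [h]
      have hcard : {p : P | σ p ∈ C}.ncard = C.ncard := by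
        have : C = σ '' {p : P | σ p ∈ C} := by
          ext v
          constructor
          · intro hv
            obtain ⟨p, rfl⟩ := hCsub hv
            exact ⟨p, hv, rfl⟩
          · rintro ⟨p, hp, rfl⟩; exact hp
        conv_rhs => rw [this]
        exact (Set.ncard_image_of_injective _ hσ).symm
      have hmemA : {p : P | μ p ≠ σ p}.ncard ∈ {n : ℕ | ∃ μ : P → V,
          G.IsClique (Set.range μ) ∧ n = {p : P | μ p ≠ σ p}.ncard} :=
        ⟨μ, hclique, rfl⟩
      calc sInf {n : ℕ | ∃ μ : P → V, G.IsClique (Set.range μ) ∧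
            n = {p : P | μ p ≠ σ p}.ncard} ≤ {p : P | μ p ≠ σ p}.ncard :=
            Nat.sInf_le hmemA
        _ = C.ncard := by rw [hset, hcard]
        _ = _ := hn.symm
    · -- every σ p is in C, so C = range σ; use a constant solution
      push_neg at hS
      have hCeq : C = Set.range σ := by
        apply le_antisymm hCsub
        rintro v ⟨p, rfl⟩; exact hS p
      have hmemA : {p : P | (fun _ => σ p₀) p ≠ σ p}.ncard ∈ {n : ℕ | ∃ μ : P → V,
          G.IsClique (Set.range μ) ∧ n = {p : P | μ p ≠ σ p}.ncard} := by
        refine ⟨fun _ => σ p₀, ?_, rfl⟩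
        rw [Set.range_const]
        exact G.isClique_singleton _
      calc sInf {n : ℕ | ∃ μ : P → V, G.IsClique (Set.range μ) ∧
            n = {p : P | μ p ≠ σ p}.ncard}
          ≤ {p : P | (fun _ => σ p₀) p ≠ σ p}.ncard := Nat.sInf_le hmemA
        _ ≤ (Set.univ : Set P).ncard := Set.ncard_le_ncard (Set.subset_univ _)
            Set.finite_univ
        _ = (Set.range σ).ncard := by
            rw [← Set.image_univ, Set.ncard_image_of_injective _ hσ]
        _ = C.ncard := by rw [hCeq]
        _ = _ := hn.symm
  · -- RHS ≤ LHS : from a minimum solution μ build a cover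
    obtain ⟨μ, hclique, hn⟩ := Nat.sInf_mem hAne
    set C : Set V := σ '' {p : P | μ p ≠ σ p} with hC
    have hCsub : C ⊆ Set.range σ := Set.image_subset_range _ _
    have hcov : ∀ u ∈ Set.range σ, ∀ v ∈ Set.range σ, u ≠ v → ¬ G.Adj u v →
        u ∈ C ∨ v ∈ C := by
      rintro u ⟨p, rfl⟩ v ⟨q, rfl⟩ huv hadj
      by_contra h
      push_neg at h
      obtain ⟨h1, h2⟩ := h
      have hp : μ p = σ p := by
        by_contra hne
        exact h1 ⟨p, hne, rfl⟩
      have hq' : μ q = σ q := by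
        by_contra hne
        exact h2 ⟨q, hne, rfl⟩
      exact hadj (hclique (hp ▸ Set.mem_range_self p) (hq' ▸ Set.mem_range_self q) huv)
    have hcard : C.ncard = {p : P | μ p ≠ σ p}.ncard :=
      Set.ncard_image_of_injective _ hσ
    calc sInf {n : ℕ | ∃ C : Set V, C ⊆ Set.range σ ∧
          (∀ u ∈ Set.range σ, ∀ v ∈ Set.range σ, u ≠ v → ¬ G.Adj u v →
            u ∈ C ∨ v ∈ C) ∧ n = C.ncard}
        ≤ C.ncard := Nat.sInf_le ⟨C, hCsub, hcov, rfl⟩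
      _ = {p : P | μ p ≠ σ p}.ncard := hcard
      _ = _ := hn.symm
end

section
/- Let G be a finite connected simple graph, P a finite set of pebbles with start map σ : P → V(G), and let μ* : P → V(G) be a solution whose image is a clique of G and which moves every pebble, i.e., σ(p) ≠ μ*(p) for all p ∈ P. Then for every vertex u ∈ μ*[P], the solution moving all pebbles to u satisfies Σ_{p∈P} d_G(σ(p), u) ≤ 2 · Σ_{p∈P} d_G(σ(p), μ*(p)). (This is the key inequality in the 2-approximation for the clique movement problem with total-movement objective in the case where the optimum moves all pebbles.) -/
/-- If an optimal clique-movement solution `μ*` moves every pebble, then moving all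
pebbles to any vertex `u` of the target clique costs at most twice the total movement
of `μ*`. -/
theorem stmt_8 {V P : Type*} [Fintype V] [Fintype P]
    (G : SimpleGraph V) (hG : G.Connected) (σ : P → V)
    (μstar : P → V) (hclique : G.IsClique (Set.range μstar))
    (hmoves : ∀ p : P, σ p ≠ μstar p) :
    ∀ u ∈ Set.range μstar,
      ∑ p : P, G.dist (σ p) u ≤ 2 * ∑ p : P, G.dist (σ p) (μstar p) := by
  intro u hu
  rw [Finset.mul_sum]
  apply Finset.sum_le_sum
  intro p _
  have h1 : 1 ≤ G.dist (σ p) (μstar p) :=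
    Nat.one_le_iff_ne_zero.mpr (by
      intro h
      exact hmoves p ((SimpleGraph.dist_eq_zero_iff_eq_or_not_reachable.mp h).resolve_right
        (fun hr => hr (hG (σ p) (μstar p)))))
  have h2 : G.dist (μstar p) u ≤ 1 := by
    by_cases h : μstar p = u
    · simp [h, SimpleGraph.dist_self]
    · exact le_of_eq (SimpleGraph.dist_eq_one_iff_adj.mpr (hclique ⟨p, rfl⟩ hu h))
  calc G.dist (σ p) u ≤ G.dist (σ p) (μstar p) + G.dist (μstar p) u :=
        hG.dist_triangle
    _ ≤ G.dist (σ p) (μstar p) + G.dist (σ p) (μstar p) := by omega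
    _ = 2 * G.dist (σ p) (μstar p) := by ring
end

section
/- Let H be a finite simple graph and construct the graph G as follows: V(G) = V(H) ∪ {v₀} where v₀ ∉ V(H); two distinct vertices u, w ∈ V(H) are adjacent in G iff they are not adjacent in H; and v₀ is adjacent in G to every vertex of V(H). Place one pebble on each vertex of V(H) (i.e., σ is a bijection from the pebble set P onto V(H)). Then the minimum, over all solutions μ : P → V(G) whose image μ[P] is a clique of G, of the total movement Σ_{p∈P} d_G(σ(p), μ(p)) equals the minimum size of a vertex cover of H. (This is the correctness of the reduction from minimum vertex cover used in the inapproximability proof for the clique movement problem with total-movement objective.) -/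
/-- The graph `G` built from a finite simple graph `H` by complementing the edges of `H`
and adding a universal vertex `v₀` (modelled as `none : Option V`). -/
def gadgetGraph {V : Type*} (H : SimpleGraph V) : SimpleGraph (Option V) where
  Adj a b :=
    match a, b with
    | some u, some w => u ≠ w ∧ ¬ H.Adj u w
    | some _, none => True
    | none, some _ => True
    | none, none => False
  symm := by
    constructor
    rintro (_ | u) (_ | w) h
    · exact h
    · trivial
    · trivial
    · exact ⟨h.1.symm, fun hadj => h.2 hadj.symm⟩
  loopless := by
    constructor
    rintro (_ | u) h
    · exact h
    · exact h.1 rfl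

/-!
A solution whose image is a clique can leave two pebbles `u`, `w` in place only if `u` and `w`
are non-adjacent in `H`, so the pebbles that move form a vertex cover of `H`, and each of them
moves at least once. Conversely, moving the pebbles of a vertex cover `C` to the universal vertex
`v₀` costs `|C|` and leaves an independent set of `H` in place, which together with `v₀` is a
clique of `G`.
-/

lemma Set.ncard_setOf_eq_sum_boole {α : Type*} [Fintype α] (p : α → Prop) [DecidablePred p] :
    {a | p a}.ncard = ∑ a, if p a then 1 else 0 := by
  rw [Set.ncard_eq_toFinset_card', Set.toFinset_ofPred, Finset.sum_boole, Nat.cast_id]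

section gadgetGraph

variable {V : Type*} (H : SimpleGraph V)

lemma gadgetGraph_adj_some_none (v : V) : (gadgetGraph H).Adj (some v) none := trivial

lemma gadgetGraph_connected : (gadgetGraph H).Connected :=
  SimpleGraph.connected_iff_exists_forall_reachable _ |>.mpr
    ⟨none, fun
      | none => .rfl
      | some v => (gadgetGraph_adj_some_none H v).symm.reachable⟩

lemma gadgetGraph_dist_some_none (v : V) : (gadgetGraph H).dist (some v) none = 1 :=
  SimpleGraph.dist_eq_one_iff_adj.mpr (gadgetGraph_adj_some_none H v)

lemma gadgetGraph_isVertexCover_of_isClique {μ : V → Option V}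
    (hμ : (gadgetGraph H).IsClique (Set.range μ)) :
    ∀ u w : V, H.Adj u w → u ∈ {v | μ v ≠ some v} ∨ w ∈ {v | μ v ≠ some v} := by
  intro u w huw
  by_contra! hfixed
  simp only [Set.mem_ofPred_eq, not_not] at hfixed
  obtain ⟨hu, hw⟩ := hfixed
  have hadj := hμ ⟨u, rfl⟩ ⟨w, rfl⟩ (by simp [hu, hw, huw.ne])
  rw [hu, hw] at hadj
  exact hadj.2 huw

lemma gadgetGraph_ncard_moved_le_sum_dist [Fintype V] (μ : V → Option V) :
    {v | μ v ≠ some v}.ncard ≤ ∑ v, (gadgetGraph H).dist (some v) (μ v) := by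
  classical
  rw [Set.ncard_setOf_eq_sum_boole]
  refine Finset.sum_le_sum fun v _ => ?_
  split_ifs with hv
  · exact (gadgetGraph_connected H).pos_dist_of_ne (Ne.symm hv)
  · exact Nat.zero_le _

open Classical in
noncomputable def coverSolution (C : Set V) (v : V) : Option V :=
  if v ∈ C then none else some v

lemma gadgetGraph_isClique_range_coverSolution {C : Set V}
    (hC : ∀ u w : V, H.Adj u w → u ∈ C ∨ w ∈ C) :
    (gadgetGraph H).IsClique (Set.range (coverSolution C)) := by
  rintro _ ⟨u, rfl⟩ _ ⟨w, rfl⟩ hne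
  unfold coverSolution at hne ⊢
  split_ifs at hne ⊢ with hu hw hw
  · exact hne rfl
  · trivial
  · trivial
  · exact ⟨fun h => hne (h ▸ rfl), fun huw => (hC u w huw).elim hu hw⟩

lemma gadgetGraph_sum_dist_coverSolution [Fintype V] (C : Set V) :
    ∑ v, (gadgetGraph H).dist (some v) (coverSolution C v) = C.ncard := by
  classical
  rw [show C.ncard = _ from Set.ncard_setOf_eq_sum_boole (· ∈ C)]
  refine Finset.sum_congr rfl fun v _ => ?_
  unfold coverSolution
  split_ifs
  · exact gadgetGraph_dist_some_none H v
  · exact SimpleGraph.dist_self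

end gadgetGraph

/-- Placing one pebble on each vertex of `H` inside `gadgetGraph H`, the minimum total
movement over solutions whose image is a clique equals the minimum size of a vertex cover
of `H`. -/
theorem stmt_9 {V : Type*} [Fintype V] (H : SimpleGraph V) :
    sInf {n : ℕ | ∃ μ : V → Option V, (gadgetGraph H).IsClique (Set.range μ) ∧
        n = ∑ v : V, (gadgetGraph H).dist (some v) (μ v)} =
      sInf {n : ℕ | ∃ C : Set V, (∀ u w : V, H.Adj u w → u ∈ C ∨ w ∈ C) ∧ n = C.ncard} := by
  apply csInf_eq_csInf_of_forall_exists_le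
  · rintro _ ⟨μ, hμ, rfl⟩
    exact ⟨_, ⟨_, gadgetGraph_isVertexCover_of_isClique H hμ, rfl⟩,
      gadgetGraph_ncard_moved_le_sum_dist H μ⟩
  · rintro _ ⟨C, hC, rfl⟩
    exact ⟨_, ⟨coverSolution C, gadgetGraph_isClique_range_coverSolution H hC, rfl⟩,
      (gadgetGraph_sum_dist_coverSolution H C).le⟩
end

section
/- Identify the vertices of a path graph on n vertices with {0, 1, …, n−1}, with distance d(i,j) = |i − j|. Let s₁ ≤ s₂ ≤ … ≤ s_k (all in {0,…,n−1}) be the starting positions of k pebbles, and let μ assign to each pebble i an end position μ(i) ∈ {0,…,n−1} such that |μ(i) − μ(j)| ≥ 2 for all i ≠ j (the end positions form an independent set of the path). Then there exists an assignment μ′ of end positions in {0,…,n−1} such that μ′(1) < μ′(2) < … < μ′(k) with μ′(i+1) − μ′(i) ≥ 2 for all i, and max_{1≤i≤k} |s_i − μ′(i)| ≤ max_{1≤i≤k} |s_i − μ(i)|. That is, if a feasible solution of the independency movement problem on a path exists, there is one of no greater maximum movement that preserves the left-to-right order of the pebbles. -/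
/-- On a path with vertices `{0,…,n−1}`, if the pebbles (with sorted start positions `s`)
admit a feasible independency solution `μ` (end positions pairwise at distance ≥ 2), then
there is an order-preserving feasible solution `μ'` (increasing with consecutive gaps ≥ 2)
whose maximum movement does not exceed that of `μ`. -/
theorem stmt_11 (n k : ℕ) (s : Fin k → ℤ)
    (hs0 : ∀ i, 0 ≤ s i) (hsn : ∀ i, s i ≤ (n : ℤ) - 1) (hmono : Monotone s)
    (μ : Fin k → ℤ) (hμ0 : ∀ i, 0 ≤ μ i) (hμn : ∀ i, μ i ≤ (n : ℤ) - 1)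
    (hind : ∀ i j, i ≠ j → 2 ≤ |μ i - μ j|) :
    ∃ μ' : Fin k → ℤ, (∀ i, 0 ≤ μ' i) ∧ (∀ i, μ' i ≤ (n : ℤ) - 1) ∧
      (∀ i j : Fin k, i < j → μ' i + 2 ≤ μ' j) ∧
      (∀ i, |s i - μ' i| ≤ Finset.univ.sup fun j => (s j - μ j).natAbs) := by
  classical
  set σ := Tuple.sort μ with hσ
  have hmono' : Monotone (μ ∘ σ) := Tuple.monotone_sort μ
  set M : ℕ := Finset.univ.sup fun j => (s j - μ j).natAbs with hM
  have key : ∀ j : Fin k, |s j - μ j| ≤ (M : ℤ) := by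
    intro j
    have h := Finset.le_sup (f := fun j => (s j - μ j).natAbs) (Finset.mem_univ j)
    rw [Int.abs_eq_natAbs, hM]
    exact_mod_cast h
  refine ⟨μ ∘ σ, fun i => hμ0 _, fun i => hμn _, ?_, ?_⟩
  · intro i j hij
    show μ (σ i) + 2 ≤ μ (σ j)
    have h1 : μ (σ i) ≤ μ (σ j) := hmono' hij.le
    have h2 : σ i ≠ σ j := fun h => hij.ne (σ.injective h)
    have h3 := hind (σ i) (σ j) h2
    rcases abs_cases (μ (σ i) - μ (σ j)) with ⟨he, _⟩ | ⟨he, _⟩ <;> omega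
  · intro i
    show |s i - μ (σ i)| ≤ (M : ℤ)
    rw [abs_sub_le_iff]
    constructor
    · -- s i - μ (σ i) ≤ M
      have hT : ∃ j ∈ (Finset.Iic i).image σ, (i : ℕ) ≤ (j : ℕ) := by
        by_contra h
        push_neg at h
        have hsub : (Finset.Iic i).image σ ⊆ Finset.Iio i := by
          intro j hj
          simp only [Finset.mem_Iio, Fin.lt_def]
          exact h j hj
        have hc := Finset.card_le_card hsub
        rw [Finset.card_image_of_injective _ σ.injective, Fin.card_Iic, Fin.card_Iio] at hc
        omega
      obtain ⟨j, hjT, hij⟩ := hT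
      obtain ⟨a, ha, rfl⟩ := Finset.mem_image.mp hjT
      have hμle : μ (σ a) ≤ μ (σ i) := hmono' (Finset.mem_Iic.mp ha)
      have hsle : s i ≤ s (σ a) := hmono (Fin.le_def.mpr hij)
      have := le_trans (le_abs_self _) (key (σ a))
      omega
    · -- μ (σ i) - s i ≤ M
      have hT : ∃ j ∈ (Finset.Ici i).image σ, (j : ℕ) ≤ (i : ℕ) := by
        by_contra h
        push_neg at h
        have hsub : (Finset.Ici i).image σ ⊆ Finset.Ioi i := by
          intro j hj
          simp only [Finset.mem_Ioi, Fin.lt_def]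
          exact h j hj
        have hc := Finset.card_le_card hsub
        rw [Finset.card_image_of_injective _ σ.injective, Fin.card_Ici, Fin.card_Ioi] at hc
        have := i.isLt
        omega
      obtain ⟨j, hjT, hij⟩ := hT
      obtain ⟨a, ha, rfl⟩ := Finset.mem_image.mp hjT
      have hμle : μ (σ i) ≤ μ (σ a) := hmono' (Finset.mem_Ici.mp ha)
      have hsle : s (σ a) ≤ s i := hmono (Fin.le_def.mpr hij)
      have habs2 : μ (σ a) - s (σ a) ≤ (M : ℤ) := by
        have h1 := key (σ a)
        rcases abs_cases (s (σ a) - μ (σ a)) with ⟨he, _⟩ | ⟨he, _⟩ <;> omega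
      omega
end

section
/- Let n, k ≥ 1 and z ≥ 0 be integers and let s₁ ≤ s₂ ≤ … ≤ s_k be integers in {0,…,n−1}. Define h₁ = max{0, s₁ − z} and h_{j+1} = max{h_j + 2, s_{j+1} − z} for 1 ≤ j < k. Then the following are equivalent: (i) h_j ≤ n−1 and h_j ≤ s_j + z for every j ∈ {1,…,k}; (ii) there exists an assignment μ of end positions in {0,…,n−1} to the k pebbles with μ(1) < μ(2) < … < μ(k), μ(j+1) − μ(j) ≥ 2 for all j, and |s_j − μ(j)| ≤ z for all j. Moreover, when (i) holds, setting μ(j) = h_j is such an assignment, and every assignment μ′ as in (ii) satisfies h_j ≤ μ′(j) for all j. (This is the correctness of the greedy algorithm for the independency movement problem on paths with maximum-movement objective.) -/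
/-- Correctness of the greedy algorithm for the independency movement problem on a path
with maximum-movement budget `z`: the greedy positions `h` (pushed as far left as
possible) are feasible iff any feasible order-preserving assignment exists; moreover `h`
itself is then feasible and is pointwise minimal among feasible assignments. -/
theorem stmt_12 (n k : ℕ) (z : ℤ) (hn : 1 ≤ n) (hk : 1 ≤ k) (hz : 0 ≤ z)
    (s h : ℕ → ℤ)
    (hmono : ∀ i j, i ≤ j → j < k → s i ≤ s j)
    (hs : ∀ j < k, 0 ≤ s j ∧ s j ≤ (n : ℤ) - 1)
    (hh0 : h 0 = max 0 (s 0 - z))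
    (hstep : ∀ j, j + 1 < k → h (j + 1) = max (h j + 2) (s (j + 1) - z)) :
    ((∀ j < k, h j ≤ (n : ℤ) - 1 ∧ h j ≤ s j + z) ↔
      (∃ μ : ℕ → ℤ, (∀ j < k, 0 ≤ μ j ∧ μ j ≤ (n : ℤ) - 1) ∧
        (∀ j, j + 1 < k → μ j + 2 ≤ μ (j + 1)) ∧
        (∀ j < k, |s j - μ j| ≤ z))) ∧
    ((∀ j < k, h j ≤ (n : ℤ) - 1 ∧ h j ≤ s j + z) →
      ((∀ j < k, 0 ≤ h j ∧ h j ≤ (n : ℤ) - 1) ∧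
        (∀ j, j + 1 < k → h j + 2 ≤ h (j + 1)) ∧
        (∀ j < k, |s j - h j| ≤ z))) ∧
    (∀ μ' : ℕ → ℤ, (∀ j < k, 0 ≤ μ' j ∧ μ' j ≤ (n : ℤ) - 1) →
      (∀ j, j + 1 < k → μ' j + 2 ≤ μ' (j + 1)) →
      (∀ j < k, |s j - μ' j| ≤ z) →
      ∀ j < k, h j ≤ μ' j) := by
  have hmin : ∀ μ' : ℕ → ℤ, (∀ j < k, 0 ≤ μ' j ∧ μ' j ≤ (n : ℤ) - 1) →
      (∀ j, j + 1 < k → μ' j + 2 ≤ μ' (j + 1)) →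
      (∀ j < k, |s j - μ' j| ≤ z) →
      ∀ j < k, h j ≤ μ' j := by
    intro μ' hb hsp habs j
    induction j with
    | zero =>
      intro hj
      have h1 := (hb 0 hj).1
      have h2 := abs_le.mp (habs 0 hj)
      rw [hh0]
      exact max_le h1 (by linarith [h2.2])
    | succ j ih =>
      intro hj
      have hjk : j < k := by omega
      have ih' := ih hjk
      have h2 := abs_le.mp (habs (j + 1) hj)
      have hsp' := hsp j hj
      rw [hstep j hj]
      exact max_le (by linarith) (by linarith [h2.2])
  have hpos : ∀ j < k, 0 ≤ h j := by
    intro j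
    induction j with
    | zero => intro hj; rw [hh0]; exact le_max_left _ _
    | succ j ih =>
      intro hj
      have := ih (by omega)
      rw [hstep j hj]
      have h2 : h j + 2 ≤ max (h j + 2) (s (j + 1) - z) := le_max_left _ _
      linarith
  have hlow : ∀ j < k, s j - z ≤ h j := by
    intro j hj
    cases j with
    | zero => rw [hh0]; exact le_max_right _ _
    | succ j => rw [hstep j hj]; exact le_max_right _ _
  have hfeas : (∀ j < k, h j ≤ (n : ℤ) - 1 ∧ h j ≤ s j + z) →
      ((∀ j < k, 0 ≤ h j ∧ h j ≤ (n : ℤ) - 1) ∧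
        (∀ j, j + 1 < k → h j + 2 ≤ h (j + 1)) ∧
        (∀ j < k, |s j - h j| ≤ z)) := by
    intro H
    refine ⟨fun j hj => ⟨hpos j hj, (H j hj).1⟩,
      fun j hj => by rw [hstep j hj]; exact le_max_left _ _,
      fun j hj => abs_le.mpr ⟨by linarith [(H j hj).2], by linarith [hlow j hj]⟩⟩
  refine ⟨⟨fun H => ⟨h, (hfeas H).1, (hfeas H).2.1, (hfeas H).2.2⟩, ?_⟩, hfeas, hmin⟩
  rintro ⟨μ, hb, hsp, habs⟩ j hj
  have hm := hmin μ hb hsp habs j hj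
  have h2 := abs_le.mp (habs j hj)
  exact ⟨hm.trans (hb j hj).2, by linarith [h2.1]⟩
end
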